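/- arXiv:2307.06611 — 2 statements merged into one kernel-verified Lean document; each statement's English description precedes it below -/
import Mathlib

section
/- Under any optimal profile the sinks are reached almost surely: let G be a turn-based stochastic game with reward function r : S → [0,∞), basis b > 1, and factor γ > 0, and let σ* and τ* be MD strategies that are optimal for the negative exponential utility, i.e., sup_τ U_{G,s}(σ*,τ) = U*(s) = inf_σ U_{G,s}(σ,τ*) for every state s (σ over Maximizer strategies, τ over Minimizer strategies). Then for the profile π* = (σ*,τ*) and every state s, P^{π*}_{G,s}[◇(S₀ ∪ S∞)] = 1. -/
open scoped ENNReal NNReal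

/-- A turn-based stochastic game: finitely many states partitioned into Maximizer
states (`isMax s = true`) and Minimizer states, finitely many actions with a nonempty
set of available actions at every state, and a transition function assigning to every
state and action a probability distribution over states. -/
structure SG (S A : Type*) [Fintype S] [Fintype A] where
  isMax : S → Bool
  actions : S → Finset A
  actions_nonempty : ∀ s, (actions s).Nonempty
  trans : S → A → S → ℝ≥0∞
  trans_sum : ∀ s a, ∑ s' : S, trans s a s' = 1

variable {S A : Type*} [Fintype S] [Fintype A]

/-- A (history-dependent, randomized) strategy: assigns to every history
(a list of past state-action pairs together with the current state) a probability
distribution over the available actions.  The same type serves for Maximizer and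
Minimizer strategies; a strategy is only consulted at the states of its owner. -/
structure Strategy (G : SG S A) where
  act : List (S × A) → S → A → ℝ≥0∞
  act_sum : ∀ h s, ∑ a ∈ G.actions s, act h s a = 1
  act_mem : ∀ h s a, a ∉ G.actions s → act h s a = 0

/-- The memoryless deterministic strategy induced by a function `f : S → A`
choosing an available action in each state. -/
noncomputable def Strategy.ofMD [DecidableEq A] (G : SG S A) (f : S → A)
    (hf : ∀ s, f s ∈ G.actions s) : Strategy G where
  act := fun _ s a => if a = f s then 1 else 0
  act_sum := by
    intro h s
    rw [Finset.sum_ite_eq' (G.actions s) (f s) (fun _ => (1 : ℝ≥0∞))]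
    simp [hf s]
  act_mem := by
    intro h s a ha
    by_cases hfa : a = f s
    · exact absurd (hf s) (by rwa [hfa] at ha)
    · simp [hfa]

/-- Probability, under the strategy profile `(σ, τ)`, that the play starting in state
`s` after history `h` performs exactly the finite sequence `w` of (action, next state)
steps.  This is the cylinder probability of the induced path measure. -/
noncomputable def runProb (G : SG S A) (σ τ : Strategy G) :
    List (S × A) → S → List (A × S) → ℝ≥0∞
  | _, _, [] => 1
  | h, s, (a, s') :: w =>
      (if G.isMax s then σ.act h s a else τ.act h s a) * G.trans s a s' *
        runProb G σ τ (h ++ [(s, a)]) s' w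

/-- Finite-horizon negative exponential utility: the expectation, over plays of length
`n` from `s`, of `b ^ (−γ · (partial total reward))`. -/
noncomputable def utilityN (G : SG S A) (σ τ : Strategy G) (r : S → ℝ≥0) (b γ : ℝ)
    (s : S) (n : ℕ) : ℝ≥0∞ :=
  ∑ w : Fin n → A × S,
    runProb G σ τ [] s (List.ofFn w) *
      ENNReal.ofReal (b ^ (-(γ * ((r s : ℝ) + ∑ i, (r (w i).2 : ℝ)))))

/-- The negative exponential utility `U_{G,s}(σ,τ) = E[b^{−γ T}]`, obtained as the
monotone limit of its finite-horizon approximations (rewards are nonnegative, so the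
integrands decrease to `b^{−γT}`, with `b^{−γ·∞} := 0`). -/
noncomputable def utility (G : SG S A) (σ τ : Strategy G) (r : S → ℝ≥0) (b γ : ℝ)
    (s : S) : ℝ≥0∞ :=
  ⨅ n : ℕ, utilityN G σ τ r b γ s n

/-- Probability that the play from `s` visits the set `T` within the first `n` steps. -/
noncomputable def reachProbN (G : SG S A) (σ τ : Strategy G) (T : Set S) (s : S)
    (n : ℕ) : ℝ≥0∞ :=
  ∑ w : Fin n → A × S,
    Set.indicator {w : Fin n → A × S | s ∈ T ∨ ∃ i, (w i).2 ∈ T}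
      (fun w => runProb G σ τ [] s (List.ofFn w)) w

/-- Probability `P^{(σ,τ)}_{G,s}[◇T]` that the play eventually visits `T`. -/
noncomputable def reachProb (G : SG S A) (σ τ : Strategy G) (T : Set S) (s : S) : ℝ≥0∞ :=
  ⨆ n : ℕ, reachProbN G σ τ T s n

/-- Probability that the total reward accumulated within the first `n` steps exceeds `K`. -/
noncomputable def exceedProbN (G : SG S A) (σ τ : Strategy G) (r : S → ℝ≥0) (K : ℝ)
    (s : S) (n : ℕ) : ℝ≥0∞ :=
  ∑ w : Fin n → A × S,
    Set.indicator {w : Fin n → A × S | K < (r s : ℝ) + ∑ i, (r (w i).2 : ℝ)}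
      (fun w => runProb G σ τ [] s (List.ofFn w)) w

/-- `P^{(σ,τ)}_{G,s}[T > 0]`, the probability that the total reward is positive. -/
noncomputable def probPosReward (G : SG S A) (σ τ : Strategy G) (r : S → ℝ≥0)
    (s : S) : ℝ≥0∞ :=
  ⨆ n : ℕ, exceedProbN G σ τ r 0 s n

/-- `P^{(σ,τ)}_{G,s}[T = ∞]`, the probability that the total reward is infinite. -/
noncomputable def probInfReward (G : SG S A) (σ τ : Strategy G) (r : S → ℝ≥0)
    (s : S) : ℝ≥0∞ :=
  ⨅ K : ℕ, ⨆ n : ℕ, exceedProbN G σ τ r K s n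

/-- `S₀`: the states from which the Maximizer cannot achieve positive total reward with
positive probability, i.e. `sup_σ inf_τ P[T > 0] = 0`. -/
noncomputable def S0 (G : SG S A) (r : S → ℝ≥0) : Set S :=
  {s | (⨆ σ : Strategy G, ⨅ τ : Strategy G, probPosReward G σ τ r s) = 0}

/-- `S∞`: the states from which the Maximizer can ensure infinite total reward almost
surely, i.e. `sup_σ inf_τ P[T = ∞] = 1`. -/
noncomputable def Sinf (G : SG S A) (r : S → ℝ≥0) : Set S :=
  {s | (⨆ σ : Strategy G, ⨅ τ : Strategy G, probInfReward G σ τ r s) = 1}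

/-- The optimal negative exponential utility `U*(s) = inf_σ sup_τ U_{G,s}(σ,τ)`. -/
noncomputable def Ustar (G : SG S A) (r : S → ℝ≥0) (b γ : ℝ) (s : S) : ℝ≥0∞ :=
  ⨅ σ : Strategy G, ⨆ τ : Strategy G, utility G σ τ r b γ s

/-- The entropic risk `−(1/γ)·log_b u` associated to a utility value `u ∈ [0,1]`,
with `−log_b 0 := ∞`. -/
noncomputable def erisk (b γ : ℝ) (u : ℝ≥0∞) : ℝ≥0∞ :=
  if u = 0 then ⊤ else ENNReal.ofReal (-(1 / γ) * Real.logb b u.toReal)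

/-- The entropic risk of the total reward under profile `(σ, τ)` from `s`. -/
noncomputable def ERiskVal (G : SG S A) (σ τ : Strategy G) (r : S → ℝ≥0) (b γ : ℝ)
    (s : S) : ℝ≥0∞ :=
  erisk b γ (utility G σ τ r b γ s)

/-- The optimal entropic risk `ERisk*(s) = sup_σ inf_τ ERisk_{G,s}(σ,τ)`. -/
noncomputable def ERiskStar (G : SG S A) (r : S → ℝ≥0) (b γ : ℝ) (s : S) : ℝ≥0∞ :=
  ⨆ σ : Strategy G, ⨅ τ : Strategy G, ERiskVal G σ τ r b γ s
section AuxProof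
open Filter Topology

private lemma sum_fn_succ {X : Type*} [Fintype X] (n : ℕ) (F : (Fin (n+1) → X) → ℝ≥0∞) :
    ∑ w : Fin (n+1) → X, F w = ∑ x : X, ∑ v : Fin n → X, F (Fin.cons x v) := by
  rw [← Fintype.sum_prod_type']
  exact Fintype.sum_equiv (Fin.consEquiv (fun _ => X)).symm _ _
    (fun w => by congr 1; exact (Fin.cons_self_tail w).symm)

private lemma ofFn_cons {X : Type*} {n : ℕ} (x : X) (v : Fin n → X) :
    List.ofFn (Fin.cons x v) = x :: List.ofFn v := by
  rw [List.ofFn_succ]; simp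

private lemma runProb_cons (G : SG S A) (σ τ : Strategy G) (h : List (S × A)) (s : S)
    (a : A) (s' : S) (l : List (A × S)) :
    runProb G σ τ h s ((a, s') :: l) =
      (if G.isMax s then σ.act h s a else τ.act h s a) * G.trans s a s' *
        runProb G σ τ (h ++ [(s, a)]) s' l := rfl

private lemma act_total (G : SG S A) (σ τ : Strategy G) (h : List (S × A)) (s : S) :
    ∑ a : A, (if G.isMax s then σ.act h s a else τ.act h s a) = 1 := by
  cases hm : G.isMax s <;> simp only [if_pos, if_neg, Bool.false_eq_true, ite_true, ite_false]
  · rw [← Strategy.act_sum τ h s]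
    exact (Finset.sum_subset (Finset.subset_univ _)
      (fun a _ ha => Strategy.act_mem τ h s a ha)).symm
  · rw [← Strategy.act_sum σ h s]
    exact (Finset.sum_subset (Finset.subset_univ _)
      (fun a _ ha => Strategy.act_mem σ h s a ha)).symm

private lemma runProb_total (G : SG S A) (σ τ : Strategy G) :
    ∀ (n : ℕ) (h : List (S × A)) (s : S),
      ∑ w : Fin n → A × S, runProb G σ τ h s (List.ofFn w) = 1
  | 0, h, s => by simp [runProb]
  | (n+1), h, s => by
    rw [sum_fn_succ]
    have : ∀ x : A × S, ∀ v : Fin n → A × S,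
        runProb G σ τ h s (List.ofFn (Fin.cons x v)) =
          (if G.isMax s then σ.act h s x.1 else τ.act h s x.1) * G.trans s x.1 x.2 *
            runProb G σ τ (h ++ [(s, x.1)]) x.2 (List.ofFn v) := by
      intro x v; rw [ofFn_cons]; exact runProb_cons G σ τ h s x.1 x.2 _
    calc ∑ x : A × S, ∑ v : Fin n → A × S, runProb G σ τ h s (List.ofFn (Fin.cons x v))
        = ∑ x : A × S, (if G.isMax s then σ.act h s x.1 else τ.act h s x.1) *
            G.trans s x.1 x.2 := by
          refine Finset.sum_congr rfl (fun x _ => ?_)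
          rw [Finset.sum_congr rfl (fun v _ => this x v), ← Finset.mul_sum,
            runProb_total G σ τ n (h ++ [(s, x.1)]) x.2, mul_one]
      _ = ∑ a : A, ∑ s' : S, (if G.isMax s then σ.act h s a else τ.act h s a) *
            G.trans s a s' := by rw [Fintype.sum_prod_type]
      _ = 1 := by
          rw [← act_total G σ τ h s]
          refine Finset.sum_congr rfl (fun a _ => ?_)
          rw [← Finset.mul_sum, G.trans_sum s a, mul_one]

end AuxProof
section AuxProof2
open Filter Topology

private noncomputable def Ee (b γ y : ℝ) : ℝ≥0∞ := ENNReal.ofReal (b ^ (-(γ * y)))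

variable {b γ : ℝ}

private lemma Ee_zero (hb : 0 < b) : Ee b γ 0 = 1 := by
  simp [Ee, Real.rpow_zero]

private lemma Ee_add (hb : 0 < b) (x y : ℝ) : Ee b γ (x + y) = Ee b γ x * Ee b γ y := by
  unfold Ee
  rw [← ENNReal.ofReal_mul (Real.rpow_nonneg hb.le _), ← Real.rpow_add hb]
  ring_nf

private lemma Ee_le_one (hb : 1 ≤ b) (hγ : 0 ≤ γ) {y : ℝ} (hy : 0 ≤ y) : Ee b γ y ≤ 1 := by
  unfold Ee
  rw [← ENNReal.ofReal_one]
  exact ENNReal.ofReal_le_ofReal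
    (Real.rpow_le_one_of_one_le_of_nonpos hb (neg_nonpos.2 (mul_nonneg hγ hy)))

private lemma Ee_pos (hb : 0 < b) (y : ℝ) : 0 < Ee b γ y :=
  ENNReal.ofReal_pos.2 (Real.rpow_pos_of_pos hb _)

private lemma Ee_ne_top (y : ℝ) : Ee b γ y ≠ ⊤ := ENNReal.ofReal_ne_top

private lemma Ee_anti (hb : 1 < b) (hγ : 0 < γ) {x y : ℝ} (hxy : x ≤ y) :
    Ee b γ y ≤ Ee b γ x := by
  unfold Ee
  exact ENNReal.ofReal_le_ofReal <| (Real.rpow_le_rpow_left_iff hb).2 <| by nlinarith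

private lemma eq_zero_of_one_le_Ee (hb : 1 < b) (hγ : 0 < γ) {y : ℝ} (hy : 0 ≤ y)
    (h1 : 1 ≤ Ee b γ y) : y = 0 := by
  by_contra hne
  have hypos : 0 < y := lt_of_le_of_ne hy (Ne.symm hne)
  have : b ^ (-(γ * y)) < b ^ (0 : ℝ) :=
    (Real.rpow_lt_rpow_left_iff hb).2 (by nlinarith)
  rw [Real.rpow_zero] at this
  have : Ee b γ y < 1 := by
    unfold Ee; rw [← ENNReal.ofReal_one]
    exact ENNReal.ofReal_lt_ofReal_iff_of_nonneg (Real.rpow_nonneg (by linarith) _) |>.2 this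
  exact absurd h1 (not_le.2 this)

end AuxProof2
section AuxProof3
open Filter Topology

variable [DecidableEq A]

private noncomputable def mdc (G : SG S A) (f g : S → A) : S → A :=
  fun s => if G.isMax s then f s else g s

private noncomputable def Pm (G : SG S A) (f g : S → A) : S → S → ℝ≥0∞ :=
  fun s s' => G.trans s (mdc G f g s) s'

private noncomputable def mprob (G : SG S A) (f g : S → A) : S → List (A × S) → ℝ≥0∞
  | _, [] => 1
  | s, (a, s') :: l => (if a = mdc G f g s then 1 else 0) * G.trans s a s' *
      mprob G f g s' l

private lemma Pm_sum (G : SG S A) (f g : S → A) (s : S) : ∑ s' : S, Pm G f g s s' = 1 :=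
  G.trans_sum s (mdc G f g s)

private lemma Pm_le_one (G : SG S A) (f g : S → A) (s s' : S) : Pm G f g s s' ≤ 1 := by
  rw [← Pm_sum G f g s]
  exact Finset.single_le_sum (fun _ _ => zero_le) (Finset.mem_univ s')

private lemma Pm_ne_top (G : SG S A) (f g : S → A) (s s' : S) : Pm G f g s s' ≠ ⊤ :=
  ne_top_of_le_ne_top ENNReal.one_ne_top (Pm_le_one G f g s s')

private lemma runProb_eq_mprob (G : SG S A) (f g : S → A) (hf : ∀ s, f s ∈ G.actions s)
    (hg : ∀ s, g s ∈ G.actions s) :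
    ∀ (l : List (A × S)) (h : List (S × A)) (s : S),
      runProb G (Strategy.ofMD G f hf) (Strategy.ofMD G g hg) h s l = mprob G f g s l
  | [], h, s => rfl
  | (a, s') :: l, h, s => by
    rw [runProb_cons, runProb_eq_mprob G f g hf hg l]
    show (if G.isMax s then (if a = f s then 1 else 0) else (if a = g s then 1 else 0))
        * G.trans s a s' * mprob G f g s' l =
      (if a = mdc G f g s then 1 else 0) * G.trans s a s' * mprob G f g s' l
    unfold mdc
    cases hm : G.isMax s <;> simp

private lemma mprob_cons (G : SG S A) (f g : S → A) (s : S) (x : A × S) (l : List (A × S)) :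
    mprob G f g s (x :: l) =
      (if x.1 = mdc G f g s then 1 else 0) * G.trans s x.1 x.2 * mprob G f g x.2 l := rfl

/-- Collapsing the sum over one step of the MD chain. -/
private lemma sum_step (G : SG S A) (f g : S → A) (s : S) (Φ : A × S → ℝ≥0∞) :
    ∑ x : A × S, (if x.1 = mdc G f g s then 1 else 0) * G.trans s x.1 x.2 * Φ x
      = ∑ s' : S, Pm G f g s s' * Φ (mdc G f g s, s') := by
  rw [Fintype.sum_prod_type]
  rw [Finset.sum_eq_single (mdc G f g s)]
  · simp [Pm]
  · intro a _ ha
    simp [ha]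
  · intro h; exact absurd (Finset.mem_univ _) h

private lemma mprob_total (G : SG S A) (f g : S → A) :
    ∀ (n : ℕ) (s : S), ∑ w : Fin n → A × S, mprob G f g s (List.ofFn w) = 1
  | 0, s => by simp [mprob]
  | (n+1), s => by
    rw [sum_fn_succ]
    calc ∑ x : A × S, ∑ v : Fin n → A × S, mprob G f g s (List.ofFn (Fin.cons x v))
        = ∑ x : A × S, (if x.1 = mdc G f g s then 1 else 0) * G.trans s x.1 x.2 := by
          refine Finset.sum_congr rfl (fun x _ => ?_)
          rw [Finset.sum_congr rfl
            (fun v _ => by rw [ofFn_cons, mprob_cons]), ← Finset.mul_sum,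
            mprob_total G f g n x.2, mul_one]
      _ = 1 := by
          have := sum_step G f g s (fun _ => (1 : ℝ≥0∞))
          simp only [mul_one] at this
          rw [this, Pm_sum]

end AuxProof3
section AuxProof4
open Filter Topology

variable [DecidableEq A]

private noncomputable def uN (G : SG S A) (f g : S → A) (r : S → ℝ≥0) (b γ : ℝ)
    (n : ℕ) (s : S) : ℝ≥0∞ :=
  ∑ w : Fin n → A × S,
    mprob G f g s (List.ofFn w) * Ee b γ ((r s : ℝ) + ∑ i, (r (w i).2 : ℝ))

private lemma utilityN_eq_uN (G : SG S A) (f g : S → A) (hf : ∀ s, f s ∈ G.actions s)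
    (hg : ∀ s, g s ∈ G.actions s) (r : S → ℝ≥0) (b γ : ℝ) (s : S) (n : ℕ) :
    utilityN G (Strategy.ofMD G f hf) (Strategy.ofMD G g hg) r b γ s n =
      uN G f g r b γ n s :=
  Finset.sum_congr rfl (fun w _ => by
    rw [runProb_eq_mprob G f g hf hg]; rfl)

private lemma uN_zero (G : SG S A) (f g : S → A) (r : S → ℝ≥0) (b γ : ℝ) (s : S) :
    uN G f g r b γ 0 s = Ee b γ (r s) := by
  simp [uN, mprob]

private lemma uN_succ (G : SG S A) (f g : S → A) (r : S → ℝ≥0) {b : ℝ} (γ : ℝ)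
    (hb : 0 < b) (n : ℕ) (s : S) :
    uN G f g r b γ (n+1) s =
      Ee b γ (r s) * ∑ s' : S, Pm G f g s s' * uN G f g r b γ n s' := by
  unfold uN
  rw [sum_fn_succ]
  have key : ∀ x : A × S, ∑ v : Fin n → A × S,
      mprob G f g s (List.ofFn (Fin.cons x v)) *
        Ee b γ ((r s : ℝ) + ∑ i : Fin (n+1), (r ((Fin.cons x v : Fin (n+1) → A × S) i).2 : ℝ))
    = (if x.1 = mdc G f g s then 1 else 0) * G.trans s x.1 x.2 *
        (Ee b γ (r s) * (∑ v : Fin n → A × S, mprob G f g x.2 (List.ofFn v) *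
          Ee b γ ((r x.2 : ℝ) + ∑ i, (r (v i).2 : ℝ)))) := by
    intro x
    rw [Finset.mul_sum, Finset.mul_sum]
    refine Finset.sum_congr rfl (fun v _ => ?_)
    rw [ofFn_cons, mprob_cons]
    have hsum : ∑ i : Fin (n+1), (r ((Fin.cons x v : Fin (n+1) → A × S) i).2 : ℝ)
        = (r x.2 : ℝ) + ∑ i : Fin n, (r (v i).2 : ℝ) := by
      rw [Fin.sum_univ_succ]; simp
    rw [hsum, Ee_add hb]
    ring
  rw [Finset.sum_congr rfl (fun x _ => key x),
    sum_step G f g s (fun x => Ee b γ (r s) * (∑ v : Fin n → A × S,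
      mprob G f g x.2 (List.ofFn v) * Ee b γ ((r x.2 : ℝ) + ∑ i, (r (v i).2 : ℝ)))),
    Finset.mul_sum]
  exact Finset.sum_congr rfl (fun s' _ => by ring)

private lemma uN_le_one (G : SG S A) (f g : S → A) (r : S → ℝ≥0) {b γ : ℝ}
    (hb : 1 < b) (hγ : 0 < γ) (n : ℕ) (s : S) : uN G f g r b γ n s ≤ 1 := by
  calc uN G f g r b γ n s ≤ ∑ w : Fin n → A × S, mprob G f g s (List.ofFn w) * 1 := by
        refine Finset.sum_le_sum (fun w _ => ?_)
        exact mul_le_mul_right (Ee_le_one hb.le hγ.le (by positivity)) _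
    _ = 1 := by
        simp only [mul_one]; exact mprob_total G f g n s

private lemma uN_anti (G : SG S A) (f g : S → A) (r : S → ℝ≥0) {b γ : ℝ}
    (hb : 1 < b) (hγ : 0 < γ) :
    ∀ (n : ℕ) (s : S), uN G f g r b γ (n+1) s ≤ uN G f g r b γ n s
  | 0, s => by
    rw [uN_succ G f g r γ (by linarith), uN_zero]
    calc Ee b γ (r s) * ∑ s' : S, Pm G f g s s' * uN G f g r b γ 0 s'
        ≤ Ee b γ (r s) * ∑ s' : S, Pm G f g s s' * 1 := by
          refine mul_le_mul_right (Finset.sum_le_sum (fun s' _ => ?_)) _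
          exact mul_le_mul_right (by rw [uN_zero]; exact Ee_le_one hb.le hγ.le (r s').2) _
      _ = Ee b γ (r s) := by
          simp only [mul_one]; rw [Pm_sum, mul_one]
  | (n+1), s => by
    rw [uN_succ G f g r γ (by linarith), uN_succ G f g r γ (by linarith)]
    refine mul_le_mul_right (Finset.sum_le_sum (fun s' _ => ?_)) _
    exact mul_le_mul_right (uN_anti G f g r hb hγ n s') _

private lemma uN_antitone (G : SG S A) (f g : S → A) (r : S → ℝ≥0) {b γ : ℝ}
    (hb : 1 < b) (hγ : 0 < γ) (s : S) : Antitone (fun n => uN G f g r b γ n s) :=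
  antitone_nat_of_succ_le (fun n => uN_anti G f g r hb hγ n s)

/-- The utility of the MD profile, as an infimum of the finite-horizon values. -/
private noncomputable def uu (G : SG S A) (f g : S → A) (r : S → ℝ≥0) (b γ : ℝ)
    (s : S) : ℝ≥0∞ :=
  ⨅ n : ℕ, uN G f g r b γ n s

private lemma utility_eq_uu (G : SG S A) (f g : S → A) (hf : ∀ s, f s ∈ G.actions s)
    (hg : ∀ s, g s ∈ G.actions s) (r : S → ℝ≥0) (b γ : ℝ) (s : S) :
    utility G (Strategy.ofMD G f hf) (Strategy.ofMD G g hg) r b γ s =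
      uu G f g r b γ s :=
  iInf_congr (fun n => utilityN_eq_uN G f g hf hg r b γ s n)

private lemma uu_le_one (G : SG S A) (f g : S → A) (r : S → ℝ≥0) {b γ : ℝ}
    (hb : 1 < b) (hγ : 0 < γ) (s : S) : uu G f g r b γ s ≤ 1 :=
  (iInf_le _ 0).trans (uN_le_one G f g r hb hγ 0 s)

/-- Fixed point equation for the utility of the MD profile. -/
private lemma uu_fixed (G : SG S A) (f g : S → A) (r : S → ℝ≥0) {b γ : ℝ}
    (hb : 1 < b) (hγ : 0 < γ) (s : S) :
    uu G f g r b γ s = Ee b γ (r s) * ∑ s' : S, Pm G f g s s' * uu G f g r b γ s' := by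
  have h1 : uu G f g r b γ s = ⨅ n : ℕ, uN G f g r b γ (n+1) s := by
    refine le_antisymm (le_iInf (fun n => iInf_le _ (n+1)))
      (le_iInf (fun n => (iInf_le _ n).trans (uN_anti G f g r hb hγ n s)))
  rw [h1]
  have h2 : ∀ n : ℕ, uN G f g r b γ (n+1) s
      = Ee b γ (r s) * ∑ s' : S, Pm G f g s s' * uN G f g r b γ n s' :=
    fun n => uN_succ G f g r γ (by linarith) n s
  rw [iInf_congr h2]
  set F : ℕ → ℝ≥0∞ := fun n => Ee b γ (r s) * ∑ s' : S, Pm G f g s s' * uN G f g r b γ n s'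
    with hF
  have hanti : Antitone F := by
    intro m n hmn
    exact mul_le_mul_right (Finset.sum_le_sum (fun s' _ =>
      mul_le_mul_right (uN_antitone G f g r hb hγ s' hmn) _)) _
  have ht1 : Tendsto F atTop (𝓝 (⨅ n, F n)) := tendsto_atTop_iInf hanti
  have ht2 : Tendsto F atTop
      (𝓝 (Ee b γ (r s) * ∑ s' : S, Pm G f g s s' * uu G f g r b γ s')) := by
    refine ENNReal.Tendsto.const_mul ?_ (Or.inr (Ee_ne_top _))
    refine tendsto_finset_sum _ (fun s' _ => ?_)
    exact ENNReal.Tendsto.const_mul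
      (tendsto_atTop_iInf (uN_antitone G f g r hb hγ s')) (Or.inr (Pm_ne_top G f g s s'))
  exact tendsto_nhds_unique ht1 ht2

end AuxProof4
section AuxProof5
open Filter Topology

variable [DecidableEq A]

private lemma sum_mul_lt {P u : S → ℝ≥0∞} {c : ℝ≥0∞} (hPsum : ∑ t : S, P t = 1)
    (hc : c ≠ ⊤) (hu : ∀ t, P t ≠ 0 → u t ≤ c) {y : S} (hy : P y ≠ 0)
    (hlt : u y < c) : ∑ t : S, P t * u t < c := by
  classical
  have hPle : ∀ t : S, P t ≤ 1 := fun t => hPsum ▸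
    Finset.single_le_sum (fun _ _ => zero_le) (Finset.mem_univ t)
  have hPtop : P y ≠ ⊤ := ne_top_of_le_ne_top ENNReal.one_ne_top (hPle y)
  have split : ∑ t : S, P t * u t
      = P y * u y + ∑ t ∈ Finset.univ.erase y, P t * u t :=
    (Finset.add_sum_erase _ _ (Finset.mem_univ y)).symm
  have h1 : P y * u y < P y * c := (ENNReal.mul_lt_mul_iff_right hy hPtop).2 hlt
  have h2 : ∑ t ∈ Finset.univ.erase y, P t * u t
      ≤ (∑ t ∈ Finset.univ.erase y, P t) * c := by
    rw [Finset.sum_mul]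
    refine Finset.sum_le_sum (fun t _ => ?_)
    by_cases hPt : P t = 0
    · simp [hPt]
    · exact mul_le_mul_right (hu t hPt) _
  have herase_le : (∑ t ∈ Finset.univ.erase y, P t) ≤ 1 := by
    rw [← hPsum]
    exact Finset.sum_le_sum_of_subset (Finset.erase_subset _ _)
  have hne : (∑ t ∈ Finset.univ.erase y, P t) * c ≠ ⊤ :=
    ENNReal.mul_ne_top (ne_top_of_le_ne_top ENNReal.one_ne_top herase_le) hc
  calc ∑ t : S, P t * u t
      = P y * u y + ∑ t ∈ Finset.univ.erase y, P t * u t := split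
    _ ≤ P y * u y + (∑ t ∈ Finset.univ.erase y, P t) * c := add_le_add_right h2 _
    _ < P y * c + (∑ t ∈ Finset.univ.erase y, P t) * c := ENNReal.add_lt_add_right hne h1
    _ = (P y + ∑ t ∈ Finset.univ.erase y, P t) * c := by rw [add_mul]
    _ = 1 * c := by rw [Finset.add_sum_erase _ _ (Finset.mem_univ y), hPsum]
    _ = c := one_mul c

private lemma mprob_mem (G : SG S A) (f g : S → A) {B : Set S}
    (hB : ∀ s s', s ∈ B → Pm G f g s s' ≠ 0 → s' ∈ B) :
    ∀ (l : List (A × S)) (s : S), s ∈ B → mprob G f g s l ≠ 0 → ∀ p ∈ l, p.2 ∈ B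
  | [], s, _, _, p, hp => absurd hp List.not_mem_nil
  | (a, s') :: l, s, hs, hne, p, hp => by
    rw [mprob_cons] at hne
    have h1 := mul_ne_zero_iff.1 hne
    have h2 := mul_ne_zero_iff.1 h1.1
    have ha : a = mdc G f g s := by
      by_contra h
      exact h2.1 (by simp [h])
    have hs' : s' ∈ B := hB s s' hs (by rw [Pm, ← ha]; exact h2.2)
    rcases List.mem_cons.1 hp with rfl | hp'
    · exact hs'
    · exact mprob_mem G f g hB l s' hs' h1.2 p hp'

private lemma uu_eq_one_on_zero (G : SG S A) (f g : S → A) (r : S → ℝ≥0) {b γ : ℝ}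
    (hb : 1 < b) {B : Set S}
    (hB : ∀ s s', s ∈ B → Pm G f g s s' ≠ 0 → s' ∈ B)
    (hr : ∀ t ∈ B, r t = 0) {s : S} (hs : s ∈ B) : uu G f g r b γ s = 1 := by
  have hN : ∀ n : ℕ, uN G f g r b γ n s = 1 := by
    intro n
    unfold uN
    rw [show ∑ w : Fin n → A × S, mprob G f g s (List.ofFn w) *
        Ee b γ ((r s : ℝ) + ∑ i, (r (w i).2 : ℝ))
        = ∑ w : Fin n → A × S, mprob G f g s (List.ofFn w) from ?_]
    · exact mprob_total G f g n s
    refine Finset.sum_congr rfl (fun w _ => ?_)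
    by_cases hw : mprob G f g s (List.ofFn w) = 0
    · simp [hw]
    · have hmem : ∀ i, (w i).2 ∈ B := fun i =>
        mprob_mem G f g hB (List.ofFn w) s hs hw (w i)
          (List.mem_ofFn.2 ⟨i, rfl⟩)
      have hzero : (r s : ℝ) + ∑ i, (r (w i).2 : ℝ) = 0 := by
        rw [hr s hs, Finset.sum_eq_zero (fun i _ => by rw [hr _ (hmem i)]; simp)]
        simp
      rw [hzero, Ee_zero (by linarith), mul_one]
  rw [uu, iInf_congr hN, iInf_const]

/-- At a local maximum of the utility with nonzero value, the reward vanishes and all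
successors have equal utility. -/
private lemma max_step (G : SG S A) (f g : S → A) (r : S → ℝ≥0) {b γ : ℝ}
    (hb : 1 < b) (hγ : 0 < γ) {x : S}
    (hmax : ∀ y, Pm G f g x y ≠ 0 → uu G f g r b γ y ≤ uu G f g r b γ x)
    (hx0 : uu G f g r b γ x ≠ 0) :
    r x = 0 ∧ ∀ y, Pm G f g x y ≠ 0 → uu G f g r b γ y = uu G f g r b γ x := by
  have hxtop : uu G f g r b γ x ≠ ⊤ :=
    ne_top_of_le_ne_top ENNReal.one_ne_top (uu_le_one G f g r hb hγ x)
  have hfix := uu_fixed G f g r hb hγ x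
  have hsum_le : ∑ y : S, Pm G f g x y * uu G f g r b γ y
      ≤ uu G f g r b γ x := by
    calc ∑ y : S, Pm G f g x y * uu G f g r b γ y
        ≤ ∑ y : S, Pm G f g x y * uu G f g r b γ x := by
          refine Finset.sum_le_sum (fun y _ => ?_)
          by_cases hy : Pm G f g x y = 0
          · simp [hy]
          · exact mul_le_mul_right (hmax y hy) _
      _ = uu G f g r b γ x := by rw [← Finset.sum_mul, Pm_sum, one_mul]
  have h1 : uu G f g r b γ x ≤ Ee b γ (r x) * uu G f g r b γ x := by
    nth_rewrite 1 [hfix]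
    exact mul_le_mul_right hsum_le _
  have hE : 1 ≤ Ee b γ ((r x : ℝ)) := by
    refine (ENNReal.mul_le_mul_iff_left hx0 hxtop).1 ?_
    rw [one_mul]; exact h1
  have hr : (r x : ℝ) = 0 := eq_zero_of_one_le_Ee hb hγ (r x).2 hE
  have hrx : r x = 0 := by exact_mod_cast hr
  have hfix' : uu G f g r b γ x = ∑ y : S, Pm G f g x y * uu G f g r b γ y := by
    rw [hfix, hr, Ee_zero (by linarith), one_mul]
  refine ⟨hrx, fun y hy => ?_⟩
  by_contra hne
  have hlt : uu G f g r b γ y < uu G f g r b γ x := lt_of_le_of_ne (hmax y hy) hne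
  have hcontra : ∑ t : S, Pm G f g x t * uu G f g r b γ t < uu G f g r b γ x :=
    sum_mul_lt (Pm_sum G f g x) hxtop (fun t ht => hmax t ht) hy hlt
  rw [← hfix'] at hcontra
  exact lt_irrefl _ hcontra

end AuxProof5
section AuxProof6
open Filter Topology Classical

variable [DecidableEq A]

private noncomputable def qN (G : SG S A) (f g : S → A) (T : Set S) (n : ℕ) (s : S) : ℝ≥0∞ :=
  ∑ w : Fin n → A × S,
    Set.indicator {w : Fin n → A × S | s ∉ T ∧ ∀ i, (w i).2 ∉ T}
      (fun w => mprob G f g s (List.ofFn w)) w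

private lemma reachProbN_add_qN (G : SG S A) (f g : S → A) (hf : ∀ s, f s ∈ G.actions s)
    (hg : ∀ s, g s ∈ G.actions s) (T : Set S) (s : S) (n : ℕ) :
    reachProbN G (Strategy.ofMD G f hf) (Strategy.ofMD G g hg) T s n + qN G f g T n s = 1 := by
  rw [reachProbN, qN, ← Finset.sum_add_distrib]
  rw [show ∑ w : Fin n → A × S,
      (Set.indicator {w : Fin n → A × S | s ∈ T ∨ ∃ i, (w i).2 ∈ T}
        (fun w => runProb G (Strategy.ofMD G f hf) (Strategy.ofMD G g hg) [] s (List.ofFn w)) w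
      + Set.indicator {w : Fin n → A × S | s ∉ T ∧ ∀ i, (w i).2 ∉ T}
        (fun w => mprob G f g s (List.ofFn w)) w)
      = ∑ w : Fin n → A × S, mprob G f g s (List.ofFn w) from ?_]
  · exact mprob_total G f g n s
  refine Finset.sum_congr rfl (fun w _ => ?_)
  by_cases hw : w ∈ {w : Fin n → A × S | s ∈ T ∨ ∃ i, (w i).2 ∈ T}
  · have hw' : w ∉ {w : Fin n → A × S | s ∉ T ∧ ∀ i, (w i).2 ∉ T} := by
      rcases hw with h | ⟨i, hi⟩
      · exact fun hc => hc.1 h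
      · exact fun hc => hc.2 i hi
    rw [Set.indicator_of_mem hw, Set.indicator_of_notMem hw', add_zero,
      runProb_eq_mprob G f g hf hg]
  · have hw' : w ∈ {w : Fin n → A × S | s ∉ T ∧ ∀ i, (w i).2 ∉ T} := by
      rw [Set.mem_setOf_eq] at hw ⊢
      push_neg at hw
      exact hw
    rw [Set.indicator_of_notMem hw, Set.indicator_of_mem hw', zero_add]

private lemma qN_mem_zero (G : SG S A) (f g : S → A) {T : Set S} {s : S} (hs : s ∈ T)
    (n : ℕ) : qN G f g T n s = 0 := by
  refine Finset.sum_eq_zero (fun w _ => ?_)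
  exact Set.indicator_of_notMem (fun hc => hc.1 hs) _

private lemma qN_zero_not_mem (G : SG S A) (f g : S → A) {T : Set S} {s : S}
    (hs : s ∉ T) : qN G f g T 0 s = 1 := by
  rw [qN]
  rw [Finset.sum_congr rfl (fun w _ => Set.indicator_of_mem
    (by exact ⟨hs, fun i => i.elim0⟩) _)]
  simpa using mprob_total G f g 0 s

private lemma qN_succ (G : SG S A) (f g : S → A) {T : Set S} {s : S} (hs : s ∉ T)
    (n : ℕ) : qN G f g T (n+1) s = ∑ s' : S, Pm G f g s s' * qN G f g T n s' := by
  rw [qN, sum_fn_succ]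
  have key : ∀ (x : A × S) (v : Fin n → A × S),
      Set.indicator {w : Fin (n+1) → A × S | s ∉ T ∧ ∀ i, (w i).2 ∉ T}
        (fun w => mprob G f g s (List.ofFn w)) (Fin.cons x v)
      = (if x.1 = mdc G f g s then 1 else 0) * G.trans s x.1 x.2 *
          Set.indicator {v : Fin n → A × S | x.2 ∉ T ∧ ∀ i, (v i).2 ∉ T}
            (fun v => mprob G f g x.2 (List.ofFn v)) v := by
    intro x v
    rw [Set.indicator_apply, Set.indicator_apply]
    have hcond : ((Fin.cons x v : Fin (n+1) → A × S) ∈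
        {w : Fin (n+1) → A × S | s ∉ T ∧ ∀ i, (w i).2 ∉ T}) ↔
        (v ∈ {v : Fin n → A × S | x.2 ∉ T ∧ ∀ i, (v i).2 ∉ T}) := by
      simp only [Set.mem_setOf_eq, hs, not_false_iff, true_and, Fin.forall_fin_succ,
        Fin.cons_zero, Fin.cons_succ]
    rw [if_congr hcond rfl rfl]
    by_cases hv : v ∈ {v : Fin n → A × S | x.2 ∉ T ∧ ∀ i, (v i).2 ∉ T}
    · rw [if_pos hv, if_pos hv, ofFn_cons, mprob_cons]
    · rw [if_neg hv, if_neg hv, mul_zero]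
  rw [Finset.sum_congr rfl (fun x _ => Finset.sum_congr rfl (fun v _ => key x v))]
  have : ∀ x : A × S, ∑ v : Fin n → A × S,
      (if x.1 = mdc G f g s then (1:ℝ≥0∞) else 0) * G.trans s x.1 x.2 *
        Set.indicator {v : Fin n → A × S | x.2 ∉ T ∧ ∀ i, (v i).2 ∉ T}
          (fun v => mprob G f g x.2 (List.ofFn v)) v
      = (if x.1 = mdc G f g s then 1 else 0) * G.trans s x.1 x.2 * qN G f g T n x.2 := by
    intro x
    rw [← Finset.mul_sum, qN]
  rw [Finset.sum_congr rfl (fun x _ => this x),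
    sum_step G f g s (fun x => qN G f g T n x.2)]

private lemma qN_le_one (G : SG S A) (f g : S → A) (T : Set S) (n : ℕ) (s : S) :
    qN G f g T n s ≤ 1 := by
  rw [← mprob_total G f g n s]
  exact Finset.sum_le_sum (fun w _ => Set.indicator_apply_le (fun _ => le_rfl))

private noncomputable def Qm (G : SG S A) (f g : S → A) (T : Set S) (n : ℕ) : ℝ≥0∞ :=
  Finset.univ.sup (qN G f g T n)

private lemma qN_le_Qm (G : SG S A) (f g : S → A) (T : Set S) (n : ℕ) (s : S) :
    qN G f g T n s ≤ Qm G f g T n :=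
  Finset.le_sup (Finset.mem_univ s)

private lemma Qm_le_one (G : SG S A) (f g : S → A) (T : Set S) (n : ℕ) :
    Qm G f g T n ≤ 1 :=
  Finset.sup_le (fun s _ => qN_le_one G f g T n s)

private lemma qN_submult (G : SG S A) (f g : S → A) (T : Set S) (m : ℕ) :
    ∀ (n : ℕ) (s : S), qN G f g T (n + m) s ≤ qN G f g T n s * Qm G f g T m
  | 0, s => by
    rw [zero_add]
    by_cases hs : s ∈ T
    · rw [qN_mem_zero G f g hs]; exact zero_le
    · rw [qN_zero_not_mem G f g hs, one_mul]; exact qN_le_Qm G f g T m s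
  | (n+1), s => by
    by_cases hs : s ∈ T
    · rw [qN_mem_zero G f g hs]; exact zero_le
    · have : n + 1 + m = (n + m) + 1 := by omega
      rw [this, qN_succ G f g hs, qN_succ G f g hs, Finset.sum_mul]
      refine Finset.sum_le_sum (fun s' _ => ?_)
      rw [mul_assoc]
      exact mul_le_mul_right (qN_submult G f g T m n s') _

private lemma qN_antile (G : SG S A) (f g : S → A) (T : Set S) (n m : ℕ) (s : S) :
    qN G f g T (n + m) s ≤ qN G f g T n s :=
  (qN_submult G f g T m n s).trans
    (by calc qN G f g T n s * Qm G f g T m ≤ qN G f g T n s * 1 :=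
          mul_le_mul_right (Qm_le_one G f g T m) _
      _ = qN G f g T n s := mul_one _)

private lemma Qm_submult (G : SG S A) (f g : S → A) (T : Set S) (n m : ℕ) :
    Qm G f g T (n + m) ≤ Qm G f g T n * Qm G f g T m :=
  Finset.sup_le (fun s _ => (qN_submult G f g T m n s).trans
    (mul_le_mul_left (qN_le_Qm G f g T n s) _))

private lemma Qm_pow (G : SG S A) (f g : S → A) (T : Set S) (n : ℕ) :
    ∀ k : ℕ, Qm G f g T (n * k) ≤ (Qm G f g T n) ^ k
  | 0 => by rw [Nat.mul_zero, pow_zero]; exact Qm_le_one G f g T 0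
  | (k+1) => by
    rw [Nat.mul_succ, pow_succ]
    exact (Qm_submult G f g T (n*k) n).trans
      (mul_le_mul_left (Qm_pow G f g T n k) _)

/-- The set of states from which `T` is avoided almost surely (at every horizon). -/
private def Cset (G : SG S A) (f g : S → A) (T : Set S) : Set S :=
  {s | ∀ n : ℕ, qN G f g T n s = 1}

private lemma Cset_disjoint (G : SG S A) (f g : S → A) {T : Set S} {s : S}
    (hs : s ∈ Cset G f g T) : s ∉ T := by
  intro hsT
  have h0 := hs 0
  rw [qN_mem_zero G f g hsT] at h0
  exact zero_ne_one h0

private lemma Cset_closed (G : SG S A) (f g : S → A) {T : Set S} {s s' : S}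
    (hs : s ∈ Cset G f g T) (hstep : Pm G f g s s' ≠ 0) : s' ∈ Cset G f g T := by
  by_contra hs'
  obtain ⟨m, hm⟩ : ∃ m, qN G f g T m s' ≠ 1 := by
    by_contra h; push_neg at h; exact hs' h
  have hlt : qN G f g T m s' < 1 := lt_of_le_of_ne (qN_le_one G f g T m s') hm
  have hcontra : ∑ t : S, Pm G f g s t * qN G f g T m t < 1 :=
    sum_mul_lt (Pm_sum G f g s) ENNReal.one_ne_top
      (fun t _ => qN_le_one G f g T m t) hstep hlt
  rw [← qN_succ G f g (Cset_disjoint G f g hs) m, hs (m+1)] at hcontra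
  exact lt_irrefl _ hcontra

end AuxProof6
section AuxProof7
open Filter Topology Classical

private lemma utilityN_le_one (G : SG S A) (σ τ : Strategy G) (r : S → ℝ≥0) {b γ : ℝ}
    (hb : 1 < b) (hγ : 0 < γ) (s : S) (n : ℕ) : utilityN G σ τ r b γ s n ≤ 1 := by
  rw [← runProb_total G σ τ n [] s]
  refine Finset.sum_le_sum (fun w _ => ?_)
  calc runProb G σ τ [] s (List.ofFn w) *
        ENNReal.ofReal (b ^ (-(γ * ((r s : ℝ) + ∑ i, (r (w i).2 : ℝ)))))
      ≤ runProb G σ τ [] s (List.ofFn w) * 1 :=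
        mul_le_mul_right (Ee_le_one hb.le hγ.le (by positivity)) _
    _ = runProb G σ τ [] s (List.ofFn w) := mul_one _

private lemma exceedProbN_le_one (G : SG S A) (σ τ : Strategy G) (r : S → ℝ≥0) (K : ℝ)
    (s : S) (n : ℕ) : exceedProbN G σ τ r K s n ≤ 1 := by
  rw [← runProb_total G σ τ n [] s]
  exact Finset.sum_le_sum (fun w _ => Set.indicator_apply_le (fun _ => le_rfl))

/-- Lemma A: the play either exceeds total reward `K` or contributes at least
`b^{-γK}` to the utility. -/
private lemma one_le_exceed_add (G : SG S A) (σ τ : Strategy G) (r : S → ℝ≥0) {b γ : ℝ}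
    (hb : 1 < b) (hγ : 0 < γ) {K : ℝ} (hK : 0 ≤ K) (s : S) (n : ℕ) :
    1 ≤ exceedProbN G σ τ r K s n +
      utilityN G σ τ r b γ s n * ENNReal.ofReal (b ^ (γ * K)) := by
  have hb0 : (0:ℝ) < b := by linarith
  conv_lhs => rw [← runProb_total G σ τ n [] s]
  rw [utilityN, exceedProbN, Finset.sum_mul, ← Finset.sum_add_distrib]
  refine Finset.sum_le_sum (fun w _ => ?_)
  set y : ℝ := (r s : ℝ) + ∑ i, (r (w i).2 : ℝ) with hy
  by_cases hw : w ∈ {w : Fin n → A × S | K < (r s : ℝ) + ∑ i, (r (w i).2 : ℝ)}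
  · rw [Set.indicator_of_mem hw]
    exact le_add_right le_rfl
  · rw [Set.indicator_of_notMem hw, zero_add]
    have hyK : y ≤ K := not_lt.1 hw
    have hone : (1:ℝ≥0∞) ≤ ENNReal.ofReal (b ^ (-(γ * y))) * ENNReal.ofReal (b ^ (γ * K)) := by
      rw [← ENNReal.ofReal_mul (Real.rpow_nonneg hb0.le _), ← Real.rpow_add hb0]
      refine ENNReal.one_le_ofReal.2 ?_
      have : (0:ℝ) ≤ -(γ * y) + γ * K := by nlinarith
      calc (1:ℝ) = b ^ (0:ℝ) := (Real.rpow_zero b).symm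
        _ ≤ b ^ (-(γ * y) + γ * K) := by
            exact (Real.rpow_le_rpow_left_iff hb).2 this
    calc runProb G σ τ [] s (List.ofFn w)
        = runProb G σ τ [] s (List.ofFn w) * 1 := (mul_one _).symm
      _ ≤ runProb G σ τ [] s (List.ofFn w) *
          (ENNReal.ofReal (b ^ (-(γ * y))) * ENNReal.ofReal (b ^ (γ * K))) :=
          mul_le_mul_right hone _
      _ = runProb G σ τ [] s (List.ofFn w) *
          ENNReal.ofReal (b ^ (-(γ * y))) * ENNReal.ofReal (b ^ (γ * K)) := by
          rw [mul_assoc]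

/-- Lemma B: if every positive reward is at least `δ`, the utility is bounded using the
probability of positive reward. -/
private lemma utilityN_le_lemB (G : SG S A) (σ τ : Strategy G) (r : S → ℝ≥0) {b γ δ : ℝ}
    (hb : 1 < b) (hγ : 0 < γ) (hδpos : 0 < δ) (hδ : ∀ t : S, r t ≠ 0 → δ ≤ (r t : ℝ))
    (s : S) (n : ℕ) :
    utilityN G σ τ r b γ s n + exceedProbN G σ τ r 0 s n ≤
      exceedProbN G σ τ r 0 s n * ENNReal.ofReal (b ^ (-(γ * δ))) + 1 := by
  have hb0 : (0:ℝ) < b := by linarith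
  set E : Set (Fin n → A × S) := {w | (0:ℝ) < (r s : ℝ) + ∑ i, (r (w i).2 : ℝ)} with hE
  set F : (Fin n → A × S) → ℝ≥0∞ := fun w => runProb G σ τ [] s (List.ofFn w) with hF
  have hsplit : exceedProbN G σ τ r 0 s n + ∑ w : Fin n → A × S, Set.indicator Eᶜ F w = 1 := by
    rw [exceedProbN, ← Finset.sum_add_distrib, ← runProb_total G σ τ n [] s]
    refine Finset.sum_congr rfl (fun w _ => ?_)
    by_cases hw : w ∈ E
    · rw [Set.indicator_of_mem hw, Set.indicator_of_notMem (by simpa using hw), add_zero]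
    · rw [Set.indicator_of_notMem hw, Set.indicator_of_mem (by simpa using hw), zero_add]
  have hmain : utilityN G σ τ r b γ s n ≤
      exceedProbN G σ τ r 0 s n * ENNReal.ofReal (b ^ (-(γ * δ))) +
        ∑ w : Fin n → A × S, Set.indicator Eᶜ F w := by
    rw [utilityN, exceedProbN, Finset.sum_mul, ← Finset.sum_add_distrib]
    refine Finset.sum_le_sum (fun w _ => ?_)
    set y : ℝ := (r s : ℝ) + ∑ i, (r (w i).2 : ℝ) with hy
    by_cases hw : w ∈ E
    · have hyδ : δ ≤ y := by
        by_contra hlt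
        push_neg at hlt
        have hterm : ∀ i : Fin n, (r (w i).2 : ℝ) = 0 := by
          intro i
          by_contra hne
          have h1 : δ ≤ (r (w i).2 : ℝ) := hδ _ (fun hc => hne (by rw [hc]; simp))
          have h2 : (r (w i).2 : ℝ) ≤ y := by
            rw [hy]
            have : (r (w i).2 : ℝ) ≤ ∑ j, (r (w j).2 : ℝ) :=
              Finset.single_le_sum (fun j _ => (r (w j).2).2) (Finset.mem_univ i)
            have hrs : (0:ℝ) ≤ (r s : ℝ) := (r s).2
            linarith
          linarith
        have hrs : (r s : ℝ) = 0 := by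
          by_contra hne
          have h1 : δ ≤ (r s : ℝ) := hδ _ (fun hc => hne (by rw [hc]; simp))
          have h2 : (r s : ℝ) ≤ y := by
            rw [hy]
            have : (0:ℝ) ≤ ∑ j, (r (w j).2 : ℝ) :=
              Finset.sum_nonneg (fun j _ => (r (w j).2).2)
            linarith
          linarith
        have : y = 0 := by
          rw [hy, hrs, Finset.sum_congr rfl (fun i _ => hterm i)]
          simp
        rw [Set.mem_setOf_eq] at hw
        rw [← hy] at hw
        linarith
      rw [Set.indicator_of_mem hw, Set.indicator_of_notMem (by simpa using hw), add_zero]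
      exact mul_le_mul_right (by
        have := Ee_anti (b := b) (γ := γ) hb hγ hyδ
        exact this) _
    · rw [Set.indicator_of_notMem hw, Set.indicator_of_mem (by simpa using hw), zero_mul,
        zero_add]
      calc F w * ENNReal.ofReal (b ^ (-(γ * y))) ≤ F w * 1 :=
            mul_le_mul_right (by
              refine Ee_le_one hb.le hγ.le ?_
              positivity) _
        _ = F w := mul_one _
  calc utilityN G σ τ r b γ s n + exceedProbN G σ τ r 0 s n
      ≤ (exceedProbN G σ τ r 0 s n * ENNReal.ofReal (b ^ (-(γ * δ))) +
          ∑ w : Fin n → A × S, Set.indicator Eᶜ F w) + exceedProbN G σ τ r 0 s n :=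
        add_le_add_left hmain _
    _ = exceedProbN G σ τ r 0 s n * ENNReal.ofReal (b ^ (-(γ * δ))) + 1 := by
        rw [add_assoc, add_comm (∑ w : Fin n → A × S, Set.indicator Eᶜ F w), hsplit]

end AuxProof7
section AuxProof8
open Filter Topology Classical

variable [DecidableEq A]

private noncomputable def defaultStrategy (G : SG S A) : Strategy G :=
  Strategy.ofMD G (fun s => (G.actions_nonempty s).choose)
    (fun s => (G.actions_nonempty s).choose_spec)

private lemma probInfReward_le_one (G : SG S A) (σ τ : Strategy G) (r : S → ℝ≥0)
    (s : S) : probInfReward G σ τ r s ≤ 1 :=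
  (iInf_le _ 0).trans (iSup_le (fun n => exceedProbN_le_one G σ τ r _ s n))

/-- If the Maximizer's strategy `σ₀` forces utility `0` against every Minimizer
strategy, the state is in `S∞`. -/
private lemma mem_Sinf (G : SG S A) (σ₀ : Strategy G) (r : S → ℝ≥0) {b γ : ℝ}
    (hb : 1 < b) (hγ : 0 < γ) (s : S)
    (hsup : (⨆ τ : Strategy G, utility G σ₀ τ r b γ s) = 0) : s ∈ Sinf G r := by
  have hb0 : (0:ℝ) < b := by linarith
  show (⨆ σ : Strategy G, ⨅ τ : Strategy G, probInfReward G σ τ r s) = 1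
  refine le_antisymm (iSup_le (fun σ => (iInf_le _ (defaultStrategy G)).trans
    (probInfReward_le_one G σ _ r s))) ?_
  refine le_iSup_of_le σ₀ (le_iInf (fun τ => le_iInf (fun K => ?_)))
  have huτ : utility G σ₀ τ r b γ s = 0 :=
    le_antisymm (hsup ▸ le_iSup (fun τ => utility G σ₀ τ r b γ s) τ) (zero_le)
  refine ENNReal.le_of_forall_pos_le_add (fun ε hε _ => ?_)
  set CK : ℝ≥0∞ := ENNReal.ofReal (b ^ (γ * (K:ℝ))) with hCK
  have hCK0 : CK ≠ 0 := (ENNReal.ofReal_pos.2 (Real.rpow_pos_of_pos hb0 _)).ne'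
  have hCKt : CK ≠ ⊤ := ENNReal.ofReal_ne_top
  have hpos : (0:ℝ≥0∞) < ↑ε / CK :=
    ENNReal.div_pos (by exact_mod_cast hε.ne') hCKt
  obtain ⟨n, hn⟩ : ∃ n, utilityN G σ₀ τ r b γ s n < ↑ε / CK := by
    rw [← iInf_lt_iff]
    show utility G σ₀ τ r b γ s < ↑ε / CK
    rw [huτ]
    exact hpos
  have hmul : utilityN G σ₀ τ r b γ s n * CK ≤ ↑ε := by
    calc utilityN G σ₀ τ r b γ s n * CK ≤ (↑ε / CK) * CK :=
          mul_le_mul_left hn.le CK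
      _ = ↑ε := by rw [mul_comm, ENNReal.mul_div_cancel hCK0 hCKt]
  calc (1:ℝ≥0∞) ≤ exceedProbN G σ₀ τ r (K:ℝ) s n + utilityN G σ₀ τ r b γ s n * CK :=
        one_le_exceed_add G σ₀ τ r hb hγ (by positivity) s n
    _ ≤ (⨆ m, exceedProbN G σ₀ τ r (K:ℝ) s m) + ↑ε :=
        add_le_add (le_iSup (fun m => exceedProbN G σ₀ τ r (K:ℝ) s m) n) hmul

/-- If the optimal utility at `s` is `1`, then `s ∈ S₀`. -/
private lemma mem_S0 (G : SG S A) (r : S → ℝ≥0) {b γ : ℝ}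
    (hb : 1 < b) (hγ : 0 < γ) (s : S)
    (hsup1 : ∀ σ : Strategy G, 1 ≤ ⨆ τ : Strategy G, utility G σ τ r b γ s) :
    s ∈ S0 G r := by
  have hb0 : (0:ℝ) < b := by linarith
  show (⨆ σ : Strategy G, ⨅ τ : Strategy G, probPosReward G σ τ r s) = 0
  refine le_antisymm (iSup_le (fun σ => ?_)) (zero_le)
  by_cases hr0 : ∀ t : S, r t = 0
  · refine (iInf_le _ (defaultStrategy G)).trans ?_
    refine iSup_le (fun n => le_of_eq (Finset.sum_eq_zero (fun w _ => ?_)))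
    refine Set.indicator_of_notMem ?_ _
    intro hmem
    rw [Set.mem_setOf_eq] at hmem
    have hz : (r s : ℝ) + ∑ i, (r (w i).2 : ℝ) = 0 := by simp [hr0]
    rw [hz] at hmem
    exact lt_irrefl _ hmem
  · push_neg at hr0
    obtain ⟨t₀, ht₀⟩ := hr0
    set F : Finset S := Finset.univ.filter (fun t => r t ≠ 0) with hFdef
    have hFne : F.Nonempty := ⟨t₀, by simp [hFdef, ht₀]⟩
    set δ : ℝ≥0 := F.inf' hFne r with hδdef
    have hδle : ∀ t : S, r t ≠ 0 → ((δ:ℝ)) ≤ (r t : ℝ) := by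
      intro t ht
      exact_mod_cast Finset.inf'_le r (by simp [hFdef, ht])
    have hδpos : (0:ℝ) < (δ:ℝ) := by
      obtain ⟨t, htF, hteq⟩ := Finset.exists_mem_eq_inf' hFne r
      have htne : r t ≠ 0 := by
        have := (Finset.mem_filter.1 htF).2
        exact this
      rw [hδdef, hteq]
      exact_mod_cast pos_iff_ne_zero.2 htne
    set c0 : ℝ≥0∞ := ENNReal.ofReal (b ^ (-(γ * (δ:ℝ)))) with hc0
    have hc0lt : c0 < 1 := by
      rw [hc0, ← ENNReal.ofReal_one]
      refine (ENNReal.ofReal_lt_ofReal_iff_of_nonneg (Real.rpow_nonneg hb0.le _)).2 ?_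
      exact Real.rpow_lt_one_of_one_lt_of_neg hb (by nlinarith)
    have hc0top : (1:ℝ≥0∞) - c0 ≠ ⊤ :=
      ne_top_of_le_ne_top ENNReal.one_ne_top tsub_le_self
    have hc0ne : (1:ℝ≥0∞) - c0 ≠ 0 := by
      simp only [ne_eq, tsub_eq_zero_iff_le, not_le]
      exact hc0lt
    refine ENNReal.le_of_forall_pos_le_add (fun ε hε _ => ?_)
    rw [zero_add]
    have hεne : (↑ε : ℝ≥0∞) ≠ 0 := by exact_mod_cast hε.ne'
    set ε' : ℝ≥0∞ := min 1 (↑ε * (1 - c0)) with hε'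
    have hε'pos : ε' ≠ 0 :=
      (lt_min one_pos (ENNReal.mul_pos hεne hc0ne)).ne'
    have hε'le1 : ε' ≤ 1 := min_le_left _ _
    obtain ⟨τ, hτ⟩ : ∃ τ : Strategy G, 1 - ε' < utility G σ τ r b γ s :=
      lt_iSup_iff.1 (lt_of_lt_of_le
        (ENNReal.sub_lt_self ENNReal.one_ne_top one_ne_zero hε'pos) (hsup1 σ))
    have hutil : 1 ≤ utility G σ τ r b γ s + ε' := by
      calc (1:ℝ≥0∞) = (1 - ε') + ε' := (tsub_add_cancel_of_le hε'le1).symm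
        _ ≤ utility G σ τ r b γ s + ε' := add_le_add_left hτ.le _
    have hexc : ∀ n, exceedProbN G σ τ r 0 s n ≤ ↑ε := by
      intro n
      set x := exceedProbN G σ τ r 0 s n with hx
      have hx1 : x ≤ 1 := exceedProbN_le_one G σ τ r 0 s n
      have hxtop : x ≠ ⊤ := ne_top_of_le_ne_top ENNReal.one_ne_top hx1
      have h2 : 1 + x ≤ 1 + (x * c0 + ε') := by
        calc 1 + x ≤ (utility G σ τ r b γ s + ε') + x := add_le_add_left hutil _
          _ ≤ (utilityN G σ τ r b γ s n + ε') + x :=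
              add_le_add_left (add_le_add_left (iInf_le _ n) _) _
          _ = (utilityN G σ τ r b γ s n + x) + ε' := by ring
          _ ≤ (x * c0 + 1) + ε' :=
              add_le_add_left (utilityN_le_lemB G σ τ r hb hγ hδpos hδle s n) _
          _ = 1 + (x * c0 + ε') := by ring
      have h3 : x ≤ x * c0 + ε' := (ENNReal.add_le_add_iff_left ENNReal.one_ne_top).1 h2
      have h4 : (1 - c0) * x ≤ ε' := by
        rw [ENNReal.sub_mul (fun _ _ => hxtop), one_mul]
        refine tsub_le_iff_right.2 ?_
        rw [add_comm, mul_comm]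
        exact h3
      have h5 : x ≤ ε' / (1 - c0) :=
        (ENNReal.le_div_iff_mul_le (Or.inl hc0ne) (Or.inl hc0top)).2
          (by rw [mul_comm]; exact h4)
      calc x ≤ ε' / (1 - c0) := h5
        _ ≤ (↑ε * (1 - c0)) / (1 - c0) :=
            ENNReal.div_le_div_right (min_le_right _ _) _
        _ = ↑ε := by rw [mul_div_assoc, ENNReal.div_self hc0ne hc0top, mul_one]
    exact (iInf_le _ τ).trans (iSup_le hexc)

end AuxProof8
/-- Under any optimal MD profile the sinks are reached almost surely:
if `σ*` and `τ*` are MD strategies optimal for the negative exponential utility from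
every state, then under the profile `(σ*,τ*)` the set `S₀ ∪ S∞` is reached with
probability `1` from every state. -/
theorem optimal_profile_reaches_sinks [DecidableEq A] (G : SG S A) (r : S → ℝ≥0)
    (b γ : ℝ) (hb : 1 < b) (hγ : 0 < γ)
    (f g : S → A) (hf : ∀ s, f s ∈ G.actions s) (hg : ∀ s, g s ∈ G.actions s)
    (hfopt : ∀ s : S,
      (⨆ τ : Strategy G, utility G (Strategy.ofMD G f hf) τ r b γ s) = Ustar G r b γ s)
    (hgopt : ∀ s : S,
      (⨅ σ : Strategy G, utility G σ (Strategy.ofMD G g hg) r b γ s) = Ustar G r b γ s) :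
    ∀ s : S,
      reachProb G (Strategy.ofMD G f hf) (Strategy.ofMD G g hg)
        (S0 G r ∪ Sinf G r) s = 1 := by
  classical
  intro s
  set σf := Strategy.ofMD G f hf with hσf
  set τg := Strategy.ofMD G g hg with hτg
  set T : Set S := S0 G r ∪ Sinf G r with hT
  -- the utility of the optimal MD profile equals the optimal utility
  have hUeq : ∀ t, uu G f g r b γ t = Ustar G r b γ t := by
    intro t
    have h1 : utility G σf τg r b γ t ≤ Ustar G r b γ t := by
      rw [← hfopt t]; exact le_iSup (fun τ => utility G σf τ r b γ t) τg
    have h2 : Ustar G r b γ t ≤ utility G σf τg r b γ t := by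
      rw [← hgopt t]; exact iInf_le (fun σ => utility G σ τg r b γ t) σf
    rw [← utility_eq_uu G f g hf hg r b γ t]
    exact le_antisymm h1 h2
  -- no state avoids `T` forever
  have hCempty : ∀ t : S, t ∉ Cset G f g T := by
    intro s₁ hs₁
    set step : S → S → Prop := fun u v => Pm G f g u v ≠ 0 with hstepdef
    set Rch : S → Set S := fun x => {t | Relation.ReflTransGen step x t} with hRchdef
    set FC : Finset S := Finset.univ.filter (fun x => x ∈ Cset G f g T) with hFCdef
    have hFCne : FC.Nonempty := ⟨s₁, by simp [hFCdef, hs₁]⟩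
    obtain ⟨s₀, hs₀F, hmin⟩ := Finset.exists_min_image FC (fun x => (Rch x).ncard) hFCne
    have hs₀C : s₀ ∈ Cset G f g T := (Finset.mem_filter.1 hs₀F).2
    set B : Set S := Rch s₀ with hBdef
    have hs₀B : s₀ ∈ B := Relation.ReflTransGen.refl
    have hBC : ∀ t, t ∈ B → t ∈ Cset G f g T := by
      intro t ht
      induction ht with
      | refl => exact hs₀C
      | tail _ hstep ih => exact Cset_closed G f g ih hstep
    have hBclosed : ∀ t t', t ∈ B → Pm G f g t t' ≠ 0 → t' ∈ B :=
      fun t t' ht h => Relation.ReflTransGen.tail ht h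
    have hconn : ∀ t, t ∈ B → s₀ ∈ Rch t := by
      intro t ht
      have hsub : Rch t ⊆ B := fun u hu => Relation.ReflTransGen.trans ht hu
      have hcard : B.ncard ≤ (Rch t).ncard :=
        hmin t (Finset.mem_filter.2 ⟨Finset.mem_univ t, hBC t ht⟩)
      have heq : Rch t = B := Set.eq_of_subset_of_ncard_le hsub hcard (Set.toFinite _)
      rw [heq]; exact hs₀B
    by_cases hzero : ∃ t ∈ B, uu G f g r b γ t = 0
    · obtain ⟨t, htB, ht0⟩ := hzero
      have hsinf : t ∈ Sinf G r := by
        apply mem_Sinf G σf r hb hγ t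
        rw [hfopt t, ← hUeq t]
        exact ht0
      exact Cset_disjoint G f g (hBC t htB) (Set.mem_union_right _ hsinf)
    · push_neg at hzero
      obtain ⟨t, htF, hmax⟩ := Finset.exists_max_image
        (Finset.univ.filter (fun x => x ∈ B)) (uu G f g r b γ) ⟨s₀, by simp [hs₀B]⟩
      have htB : t ∈ B := (Finset.mem_filter.1 htF).2
      have hmax' : ∀ y, y ∈ B → uu G f g r b γ y ≤ uu G f g r b γ t :=
        fun y hy => hmax y (Finset.mem_filter.2 ⟨Finset.mem_univ y, hy⟩)
      have hsubt : Rch t ⊆ B := fun u hu => Relation.ReflTransGen.trans htB hu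
      have hprop : ∀ x, x ∈ Rch t → uu G f g r b γ x = uu G f g r b γ t := by
        intro x hx
        induction hx with
        | refl => rfl
        | @tail u v hxy hstep ih =>
          have huB : u ∈ B := hsubt hxy
          have hmaxu : ∀ y, Pm G f g u y ≠ 0 → uu G f g r b γ y ≤ uu G f g r b γ u := by
            intro y hy
            rw [ih]
            exact hmax' y (hBclosed u y huB hy)
          have hv := (max_step G f g r hb hγ hmaxu (hzero u huB)).2 v hstep
          rw [hv, ih]
      have hrzero : ∀ x, x ∈ B → r x = 0 := by
        intro x hxB
        have hxR : x ∈ Rch t := Relation.ReflTransGen.trans (hconn t htB) hxB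
        have hmaxx : ∀ y, Pm G f g x y ≠ 0 → uu G f g r b γ y ≤ uu G f g r b γ x := by
          intro y hy
          rw [hprop x hxR]
          exact hmax' y (hBclosed x y hxB hy)
        exact (max_step G f g r hb hγ hmaxx (hzero x hxB)).1
      have huu1 : uu G f g r b γ t = 1 :=
        uu_eq_one_on_zero G f g r hb (fun a a' ha h => hBclosed a a' ha h) hrzero htB
      have hs0 : t ∈ S0 G r := by
        apply mem_S0 G r hb hγ t
        intro σ
        have h1 : (1:ℝ≥0∞) = Ustar G r b γ t := by rw [← hUeq t, huu1]
        rw [h1]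
        exact iInf_le (fun σ => ⨆ τ, utility G σ τ r b γ t) σ
      exact Cset_disjoint G f g (hBC t htB) (Set.mem_union_left _ hs0)
  -- hence from every state, avoidance probabilities decay to zero
  have hq : ∀ t : S, ∃ n, qN G f g T n t < 1 := by
    intro t
    by_contra h
    push_neg at h
    exact hCempty t (fun n => le_antisymm (qN_le_one G f g T n t) (h n))
  choose nn hnn using hq
  set N0 : ℕ := Finset.univ.sup nn with hN0
  have hqN0 : ∀ t, qN G f g T N0 t < 1 := by
    intro t
    have hle : nn t ≤ N0 := Finset.le_sup (Finset.mem_univ t)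
    have hmono : qN G f g T N0 t ≤ qN G f g T (nn t) t := by
      rw [show N0 = nn t + (N0 - nn t) from (Nat.add_sub_cancel' hle).symm]
      exact qN_antile G f g T (nn t) (N0 - nn t) t
    exact lt_of_le_of_lt hmono (hnn t)
  have hQ1 : Qm G f g T (N0 + 1) < 1 := by
    rw [Qm]
    refine (Finset.sup_lt_iff (by norm_num : (⊥:ℝ≥0∞) < 1)).2 (fun t _ => ?_)
    calc qN G f g T (N0 + 1) t ≤ qN G f g T N0 t := qN_antile G f g T N0 1 t
      _ < 1 := hqN0 t
  refine le_antisymm (iSup_le (fun n => ?_)) ?_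
  · calc reachProbN G σf τg T s n
        ≤ reachProbN G σf τg T s n + qN G f g T n s := le_self_add
      _ = 1 := reachProbN_add_qN G f g hf hg T s n
  · refine ENNReal.le_of_forall_pos_le_add (fun ε hε _ => ?_)
    have hεpos : (0:ℝ≥0∞) < ↑ε := by exact_mod_cast hε
    obtain ⟨k, hk⟩ : ∃ k, (Qm G f g T (N0+1)) ^ k < ↑ε := by
      have ht := ENNReal.tendsto_pow_atTop_nhds_zero_of_lt_one hQ1
      exact (ht.eventually (gt_mem_nhds hεpos)).exists
    have hqk : qN G f g T ((N0+1) * k) s < ↑ε :=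
      lt_of_le_of_lt ((qN_le_Qm G f g T _ s).trans (Qm_pow G f g T (N0+1) k)) hk
    calc (1:ℝ≥0∞)
        = reachProbN G σf τg T s ((N0+1)*k) + qN G f g T ((N0+1)*k) s :=
          (reachProbN_add_qN G f g hf hg T s ((N0+1)*k)).symm
      _ ≤ reachProb G σf τg T s + ↑ε :=
          add_le_add (le_iSup (fun n => reachProbN G σf τg T s n) ((N0+1)*k)) hqk.le
end

section
/- Let b be a positive rational number and q a positive integer such that the polynomial X^q − b is irreducible over ℚ. Let ℓ be an integer with 0 ≤ ℓ < q and set m = q / gcd(ℓ, q), with the convention gcd(0, q) = q. Then ℓ·m/q is a nonnegative integer, so b^{−ℓ·m/q} is rational, and the minimal polynomial over ℚ of the real number b^{−ℓ/q} is X^m − b^{−ℓ·m/q}; in particular, the degree of b^{−ℓ/q} over ℚ is exactly m. -/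
set_option synthInstance.maxHeartbeats 1000000
set_option maxHeartbeats 1000000

open Polynomial IntermediateField

/-- Let `b` be a positive rational and `q` a positive integer with
`X^q − b` irreducible over `ℚ`.  Let `0 ≤ ℓ < q` and `m = q / gcd(ℓ, q)`.  Then
`ℓ·m/q` is a (nonnegative) integer, so `b^{−ℓ·m/q}` is rational, and the minimal
polynomial over `ℚ` of the real number `b^{−ℓ/q}` is `X^m − b^{−ℓ·m/q}`; in
particular the degree of `b^{−ℓ/q}` over `ℚ` is exactly `m`. -/
theorem minpoly_of_rational_root_power (b : ℚ) (hb : 0 < b) (q : ℕ) (hq : 0 < q)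
    (hirr : Irreducible (Polynomial.X ^ q - Polynomial.C b : Polynomial ℚ))
    (ℓ : ℕ) (hℓ : ℓ < q) :
    q ∣ ℓ * (q / Nat.gcd ℓ q) ∧
    minpoly ℚ ((b : ℝ) ^ (-(ℓ : ℝ) / q)) =
      Polynomial.X ^ (q / Nat.gcd ℓ q) -
        Polynomial.C (b ^ (-((ℓ * (q / Nat.gcd ℓ q) / q : ℕ) : ℤ))) ∧
    (minpoly ℚ ((b : ℝ) ^ (-(ℓ : ℝ) / q))).natDegree = q / Nat.gcd ℓ q := by
  set d := Nat.gcd ℓ q with hd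
  set m := q / d with hm
  have hd0 : 0 < d := Nat.gcd_pos_of_pos_right ℓ hq
  have hdq : d ∣ q := Nat.gcd_dvd_right ℓ q
  have hdl : d ∣ ℓ := Nat.gcd_dvd_left ℓ q
  have hm0 : 0 < m := Nat.div_pos (Nat.le_of_dvd hq hdq) hd0
  have hqdm : q = d * m := (Nat.div_mul_cancel hdq).symm.trans (mul_comm _ _)
  set ℓ' := ℓ / d with hℓ'
  have hlm : ℓ * m = ℓ' * q := by
    conv_lhs => rw [← Nat.div_mul_cancel hdl]
    rw [hqdm, ← hℓ']; ring
  have hqdvd : q ∣ ℓ * m := ⟨ℓ', by rw [hlm, mul_comm]⟩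
  have hquot : ℓ * m / q = ℓ' := by rw [hlm, Nat.mul_div_cancel ℓ' hq]
  -- real numbers
  have hbR : (0:ℝ) < (b:ℝ) := by exact_mod_cast hb
  set β : ℝ := (b:ℝ) ^ ((q:ℝ)⁻¹) with hβ
  have hβpos : 0 < β := Real.rpow_pos_of_pos hbR _
  have hβq : β ^ q = (b:ℝ) := by
    rw [hβ, ← Real.rpow_natCast (((b:ℝ)) ^ ((q:ℝ)⁻¹)) q, ← Real.rpow_mul hbR.le,
      inv_mul_cancel₀ (by exact_mod_cast hq.ne' : (q:ℝ) ≠ 0), Real.rpow_one]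
  have hαβ : (b : ℝ) ^ (-(ℓ : ℝ) / q) = β ^ (-(ℓ:ℤ)) := by
    rw [hβ, ← Real.rpow_intCast (((b:ℝ)) ^ ((q:ℝ)⁻¹)) (-(ℓ:ℤ)), ← Real.rpow_mul hbR.le]
    push_cast
    ring_nf
  -- minpoly of β
  have hmonicq : (X ^ q - C b : ℚ[X]).Monic := monic_X_pow_sub_C b hq.ne'
  have haevalβ : Polynomial.aeval β (X ^ q - C b : ℚ[X]) = 0 := by
    simp [hβq]
  have hminβ : minpoly ℚ β = X ^ q - C b :=
    (minpoly.eq_of_irreducible_of_monic hirr haevalβ hmonicq).symm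
  have hintβ : IsIntegral ℚ β := ⟨_, hmonicq, haevalβ⟩
  -- α and its annihilating polynomial
  set α : ℝ := β ^ (-(ℓ:ℤ)) with hα
  set a : ℚ := b ^ (-(ℓ':ℤ)) with ha
  have hαm : α ^ m = (algebraMap ℚ ℝ) a := by
    rw [hα, ha, ← zpow_natCast (β ^ (-(ℓ:ℤ))) m, ← zpow_mul]
    have : (-(ℓ:ℤ)) * m = (q:ℤ) * (-(ℓ':ℤ)) := by
      have : (ℓ:ℤ) * m = ℓ' * q := by exact_mod_cast hlm
      linarith
    rw [this, zpow_mul, zpow_natCast, hβq]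
    push_cast [zpow_neg]
    simp
  have hmonicm : (X ^ m - C a : ℚ[X]).Monic := monic_X_pow_sub_C a hm0.ne'
  have haevalα : Polynomial.aeval α (X ^ m - C a : ℚ[X]) = 0 := by
    simp [hαm]
  have hintα : IsIntegral ℚ α := ⟨_, hmonicm, haevalα⟩
  have hnle : (minpoly ℚ α).natDegree ≤ m := by
    have := Polynomial.natDegree_le_natDegree (minpoly.min ℚ α hmonicm haevalα)
    rwa [natDegree_X_pow_sub_C] at this
  -- tower argument for the lower bound
  have hβne : β ≠ 0 := hβpos.ne'
  have hαβmem : α ∈ ℚ⟮β⟯ := zpow_mem (mem_adjoin_simple_self ℚ β) _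
  have hc : β ^ d ∈ ℚ⟮α⟯ := by
    have hbez : (d:ℤ) = ℓ * Nat.gcdA ℓ q + q * Nat.gcdB ℓ q := Nat.gcd_eq_gcd_ab ℓ q
    have : β ^ d = (β ^ (ℓ:ℤ)) ^ Nat.gcdA ℓ q * (β ^ (q:ℤ)) ^ Nat.gcdB ℓ q := by
      rw [← zpow_natCast β d, hbez, zpow_add₀ hβne, zpow_mul, zpow_mul]
    rw [this]
    have h1 : β ^ (ℓ:ℤ) = α⁻¹ := by rw [hα, ← zpow_neg, neg_neg]
    have h2 : β ^ (q:ℤ) = algebraMap ℚ ℝ b := by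
      rw [zpow_natCast, hβq]; simp
    rw [h1, h2]
    exact mul_mem (zpow_mem (inv_mem (mem_adjoin_simple_self ℚ α)) _)
      (zpow_mem (IntermediateField.algebraMap_mem _ b) _)
  set c : ℚ⟮α⟯ := ⟨β ^ d, hc⟩ with hcdef
  have hmonicd : (X ^ d - C c : Polynomial ℚ⟮α⟯).Monic := monic_X_pow_sub_C c hd0.ne'
  have haevalc : Polynomial.aeval β (X ^ d - C c : Polynomial ℚ⟮α⟯) = 0 := by
    rw [map_sub, map_pow, Polynomial.aeval_X, Polynomial.aeval_C]
    have : (algebraMap ℚ⟮α⟯ ℝ) c = β ^ d := rfl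
    rw [this, sub_self]
  have hintKβ : IsIntegral ℚ⟮α⟯ β := ⟨_, hmonicd, haevalc⟩
  have hrle : (minpoly ℚ⟮α⟯ β).natDegree ≤ d := by
    have := Polynomial.natDegree_le_natDegree (minpoly.min ℚ⟮α⟯ β hmonicd haevalc)
    rwa [natDegree_X_pow_sub_C] at this
  have hadj : (adjoin ℚ⟮α⟯ {β}).restrictScalars ℚ = ℚ⟮β⟯ := by
    erw [adjoin_adjoin_left]
    apply le_antisymm
    · rw [adjoin_le_iff]
      rintro x (rfl | rfl)
      · exact hαβmem
      · exact mem_adjoin_simple_self ℚ β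
    · exact adjoin.mono _ _ _ Set.subset_union_right
  have hfr1 : Module.finrank ℚ ℚ⟮β⟯ = q := by
    rw [adjoin.finrank hintβ, hminβ, natDegree_X_pow_sub_C]
  have hfr2 : Module.finrank ℚ⟮α⟯ (adjoin ℚ⟮α⟯ {β} : IntermediateField ℚ⟮α⟯ ℝ)
      = (minpoly ℚ⟮α⟯ β).natDegree := adjoin.finrank hintKβ
  have hfr3 : Module.finrank ℚ ℚ⟮α⟯ = (minpoly ℚ α).natDegree := adjoin.finrank hintα
  haveI := adjoin.finiteDimensional hintKβ
  haveI := adjoin.finiteDimensional hintα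
  have htower : Module.finrank ℚ ℚ⟮α⟯ *
      Module.finrank ℚ⟮α⟯ (adjoin ℚ⟮α⟯ {β} : IntermediateField ℚ⟮α⟯ ℝ) = q := by
    rw [Module.finrank_mul_finrank ℚ ℚ⟮α⟯ (adjoin ℚ⟮α⟯ {β} : IntermediateField ℚ⟮α⟯ ℝ)]
    rw [← hfr1, ← hadj]
    rfl
  have hmle : m ≤ (minpoly ℚ α).natDegree := by
    by_contra hcon
    push_neg at hcon
    have h1 : Module.finrank ℚ ℚ⟮α⟯ *
        Module.finrank ℚ⟮α⟯ (adjoin ℚ⟮α⟯ {β} : IntermediateField ℚ⟮α⟯ ℝ)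
        < m * d := by
      calc _ ≤ (minpoly ℚ α).natDegree * d := by
              rw [hfr3, hfr2]; exact Nat.mul_le_mul_left _ hrle
        _ < m * d := by exact Nat.mul_lt_mul_of_lt_of_le hcon le_rfl hd0
    rw [htower, hqdm, mul_comm d m] at h1
    exact lt_irrefl _ h1
  have hdeg : (minpoly ℚ α).natDegree = m := le_antisymm hnle hmle
  have hminα : minpoly ℚ α = X ^ m - C a := by
    refine (Polynomial.eq_of_monic_of_dvd_of_natDegree_le (minpoly.monic hintα) hmonicm
      (minpoly.dvd ℚ α haevalα) ?_).symm
    rw [hdeg, natDegree_X_pow_sub_C]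
  refine ⟨hqdvd, ?_, ?_⟩
  · rw [hαβ, hquot, hminα]
  · rw [hαβ, hdeg]
end
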